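/- Let P = ⟨P_i⟩_{i<n} be a dynamic logic program such that ρ(P) is acyclic w.r.t. a level mapping ℓ, and let ⟨J_k⟩_{k≥0} be the chain defined from ℓ. Then for every objective literal l with ℓ(l) = k₀ and every k ≥ k₀: l ∈ J_k if and only if l ∈ J_{k₀}. -/
import Mathlib


namespace RuleUpdates

/-- Objective literal: an atom (a natural number) or its strong negation. -/
inductive OLit where
  | pos : ℕ → OLit
  | neg : ℕ → OLit
deriving DecidableEq

/-- Strong negation on objective literals (with ¬¬p identified with p). -/
def OLit.compl : OLit → OLit
  | .pos p => .neg p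
  | .neg p => .pos p

/-- Literal: an objective literal or its default negation (not not l = l). -/
inductive Lit where
  | obj : OLit → Lit
  | ndef : OLit → Lit
deriving DecidableEq

/-- Extended rule: a head literal and a finite set of body literals. -/
structure Rule where
  head : Lit
  body : Finset Lit

/-- Interpretation: a consistent set of objective literals. -/
def Interp (J : Set OLit) : Prop :=
  ∀ p : ℕ, ¬ (OLit.pos p ∈ J ∧ OLit.neg p ∈ J)

/-- Satisfaction of a literal. -/
def satLit (J : Set OLit) : Lit → Prop
  | .obj l => l ∈ J
  | .ndef l => l ∉ J

/-- Satisfaction of a set of body literals. -/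
def satBody (J : Set OLit) (B : Finset Lit) : Prop :=
  ∀ L ∈ B, satLit J L

/-- Satisfaction of a rule. -/
def satRule (J : Set OLit) (π : Rule) : Prop :=
  satBody J π.body → satLit J π.head

/-- J is a model of a program. -/
def isModel (J : Set OLit) (P : Set Rule) : Prop :=
  ∀ π ∈ P, satRule J π

/-- J* = J ∪ { not l | l ∈ ℒ ∖ J }, as a set of literals. -/
def star (J : Set OLit) : Set Lit :=
  {L | ∃ l : OLit, (L = Lit.obj l ∧ l ∈ J) ∨ (L = Lit.ndef l ∧ l ∉ J)}

/-- def(J) = { (not l.) | l ∈ ℒ ∖ J }. -/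
def defFacts (J : Set OLit) : Set Rule :=
  {π | ∃ l : OLit, l ∉ J ∧ π = ⟨Lit.ndef l, ∅⟩}

/-- S (a set of literals) is closed under program P, all literals
treated as distinct propositional atoms. -/
def closedUnder (P : Set Rule) (S : Set Lit) : Prop :=
  ∀ π ∈ P, (π.body : Set Lit) ⊆ S → π.head ∈ S

/-- least(P): the least model of P when all literals are treated as
distinct propositional atoms. -/
def leastModel (P : Set Rule) : Set Lit :=
  ⋂₀ {S | closedUnder P S}

/-- Stable model of an extended program: J* = least(P ∪ def(J)). -/
def isStableModel (P : Set Rule) (J : Set OLit) : Prop :=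
  Interp J ∧ star J = leastModel (P ∪ defFacts J)

/-- Level of a literal, with ℓ(not l) = ℓ(l). -/
def litLevel (ℓ : OLit → ℕ) : Lit → ℕ
  | .obj l => ℓ l
  | .ndef l => ℓ l

/-- ℓ↑(S): the maximal level of a literal in the finite set S. -/
def supLevel (ℓ : OLit → ℕ) (S : Finset Lit) : ℕ :=
  S.sup (litLevel ℓ)

/-- ℓ↓(S): the minimal level of a literal in the finite set S. -/
noncomputable def infLevel (ℓ : OLit → ℕ) (S : Finset Lit) : ℕ :=
  sInf (litLevel ℓ '' (S : Set Lit))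

/-- Well-supported model of an extended program w.r.t. a level mapping ℓ. -/
def isWSModelWith (P : Set Rule) (J : Set OLit) (ℓ : OLit → ℕ) : Prop :=
  isModel J P ∧
    ∀ l ∈ J, ∃ π ∈ P, π.head = Lit.obj l ∧ satBody J π.body ∧
      supLevel ℓ π.body < ℓ l

/-- Well-supported model of an extended program. -/
def isWSModel (P : Set Rule) (J : Set OLit) : Prop :=
  Interp J ∧ ∃ ℓ : OLit → ℕ, isWSModelWith P J ℓ

/-- con(L): the literals in conflict with L. -/
def con : Lit → Finset Lit
  | .obj l => {Lit.ndef l, Lit.obj l.compl}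
  | .ndef l => {Lit.obj l}

/-- ρ(P): all rules occurring in the components of the DLP. -/
def allRules {n : ℕ} (P : Fin n → Set Rule) : Set Rule :=
  {π | ∃ i : Fin n, π ∈ P i}

/-- The rule π ∈ P i is rejected w.r.t. the set of literals S:
some later σ with conflicting head has its body included in S. -/
def rejIn {n : ℕ} (P : Fin n → Set Rule) (S : Set Lit) (i : Fin n) (π : Rule) : Prop :=
  ∃ j : Fin n, i < j ∧ ∃ σ ∈ P j, σ.head ∈ con π.head ∧ (σ.body : Set Lit) ⊆ S

/-- rem(P, S) = ρ(P) ∖ rej(P, S), as a set of component-indexed rules. -/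
def remSet {n : ℕ} (P : Fin n → Set Rule) (S : Set Lit) : Set (Fin n × Rule) :=
  {x | x.2 ∈ P x.1 ∧ ¬ rejIn P S x.1 x.2}

/-- The operator T_{P,J}. -/
def TOp {n : ℕ} (P : Fin n → Set Rule) (J : Set OLit) (S : Set Lit) : Set Lit :=
  {L | ((∃ x ∈ remSet P (star J), x.2.head = L ∧ (x.2.body : Set Lit) ⊆ S) ∨
        (∃ l : OLit, l ∉ J ∧ L = Lit.ndef l)) ∧
       ¬ ∃ σ ∈ remSet P S, σ.2.head ∈ con L ∧ (σ.2.body : Set Lit) ⊆ star J}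

/-- Iterates of T_{P,J} starting from ∅. -/
def TIter {n : ℕ} (P : Fin n → Set Rule) (J : Set OLit) : ℕ → Set Lit
  | 0 => ∅
  | k + 1 => TOp P J (TIter P J k)

/-- Extended RD-model of a DLP: J* = ⋃_{k≥0} T_{P,J}^k(∅). -/
def isExtRD {n : ℕ} (P : Fin n → Set Rule) (J : Set OLit) : Prop :=
  Interp J ∧ star J = ⋃ k : ℕ, TIter P J k

/-- rej^ℓ(P, J): π ∈ P i is rejected w.r.t. J and the level mapping ℓ. -/
def rejLvl {n : ℕ} (P : Fin n → Set Rule) (J : Set OLit) (ℓ : OLit → ℕ)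
    (i : Fin n) (π : Rule) : Prop :=
  ∃ j : Fin n, i < j ∧ ∃ σ ∈ P j, σ.head ∈ con π.head ∧ satBody J σ.body ∧
    supLevel ℓ σ.body < infLevel ℓ (con π.head)

/-- Extended WS-model of a DLP. -/
def isExtWS {n : ℕ} (P : Fin n → Set Rule) (J : Set OLit) : Prop :=
  Interp J ∧ ∃ ℓ : OLit → ℕ,
    (∀ i : Fin n, ∀ π ∈ P i, ¬ rejLvl P J ℓ i π → satRule J π) ∧
    (∀ l ∈ J, ∃ x ∈ remSet P (star J), x.2.head = Lit.obj l ∧ satBody J x.2.body ∧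
      supLevel ℓ x.2.body < ℓ l)

/-- A program is acyclic w.r.t. a level mapping ℓ. -/
def acyclicWrt (Q : Set Rule) (ℓ : OLit → ℕ) : Prop :=
  (∀ l : OLit, ℓ l = ℓ l.compl) ∧ ∀ π ∈ Q, supLevel ℓ π.body < litLevel ℓ π.head

/-- The chain ⟨J_k⟩ defined from a level mapping ℓ over a DLP. -/
def chain {n : ℕ} (P : Fin n → Set Rule) (ℓ : OLit → ℕ) : ℕ → Set OLit
  | 0 => ∅
  | k + 1 =>
    {l | ∃ i : Fin n, ∃ π ∈ P i, π.head = Lit.obj l ∧ ℓ l ≤ k + 1 ∧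
      satBody (chain P ℓ k) π.body ∧
      ¬ ∃ j : Fin n, i < j ∧ ∃ σ ∈ P j, σ.head ∈ con π.head ∧
        satBody (chain P ℓ k) σ.body}

lemma satBody_iff (ℓ : OLit → ℕ) (m : ℕ) (J J' : Set OLit)
    (h : ∀ l, ℓ l ≤ m → (l ∈ J ↔ l ∈ J')) (B : Finset Lit)
    (hB : supLevel ℓ B ≤ m) : satBody J B ↔ satBody J' B := by
  unfold satBody
  refine forall_congr' fun L => imp_congr_right fun hL => ?_
  have hlev : litLevel ℓ L ≤ m := le_trans (Finset.le_sup hL) hB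
  cases L with
  | obj l => exact h l hlev
  | ndef l => exact not_congr (h l hlev)

lemma head_level (ℓ : OLit → ℕ) (hcompl : ∀ l : OLit, ℓ l = ℓ l.compl)
    (l : OLit) (L : Lit) (h : L ∈ con (Lit.obj l)) : litLevel ℓ L = ℓ l := by
  simp only [con, Finset.mem_insert, Finset.mem_singleton] at h
  rcases h with h | h <;> subst h <;> simp [litLevel]
  exact (hcompl l).symm

lemma chain_step (n : ℕ) (P : Fin n → Set Rule) (ℓ : OLit → ℕ)
    (hacy : acyclicWrt (allRules P) ℓ) :
    ∀ m : ℕ, ∀ l : OLit, ℓ l ≤ m →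
      (l ∈ chain P ℓ (m + 1) ↔ l ∈ chain P ℓ m) := by
  intro m
  induction m with
  | zero =>
    intro l hl
    constructor
    · rintro ⟨i, π, hπ, hhead, -, -, -⟩
      have h1 := hacy.2 π ⟨i, hπ⟩
      rw [hhead] at h1
      simp only [litLevel] at h1
      omega
    · intro h; exact absurd h (Set.notMem_empty l)
  | succ m ih =>
    intro l hl
    have agree : ∀ B : Finset Lit, supLevel ℓ B ≤ m →
        (satBody (chain P ℓ (m + 1)) B ↔ satBody (chain P ℓ m) B) :=
      fun B hB => satBody_iff ℓ m _ _ ih B hB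
    constructor
    · rintro ⟨i, π, hπ, hhead, -, hsat, hrej⟩
      have hb : supLevel ℓ π.body ≤ m := by
        have h1 := hacy.2 π ⟨i, hπ⟩
        rw [hhead] at h1; simp only [litLevel] at h1; omega
      refine ⟨i, π, hπ, hhead, hl, (agree _ hb).mp hsat, ?_⟩
      rintro ⟨j, hij, σ, hσ, hcon, hsatσ⟩
      rw [hhead] at hcon
      have hbσ : supLevel ℓ σ.body ≤ m := by
        have h1 := hacy.2 σ ⟨j, hσ⟩
        have h2 := head_level ℓ hacy.1 l σ.head hcon
        omega
      exact hrej ⟨j, hij, σ, hσ, hhead ▸ hcon, (agree _ hbσ).mpr hsatσ⟩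
    · rintro ⟨i, π, hπ, hhead, -, hsat, hrej⟩
      have hb : supLevel ℓ π.body ≤ m := by
        have h1 := hacy.2 π ⟨i, hπ⟩
        rw [hhead] at h1; simp only [litLevel] at h1; omega
      refine ⟨i, π, hπ, hhead, by omega, (agree _ hb).mpr hsat, ?_⟩
      rintro ⟨j, hij, σ, hσ, hcon, hsatσ⟩
      rw [hhead] at hcon
      have hbσ : supLevel ℓ σ.body ≤ m := by
        have h1 := hacy.2 σ ⟨j, hσ⟩
        have h2 := head_level ℓ hacy.1 l σ.head hcon
        omega
      exact hrej ⟨j, hij, σ, hσ, hhead ▸ hcon, (agree _ hbσ).mp hsatσ⟩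

/-- for an acyclic DLP, the chain stabilises at each level:
for ℓ(l) = k₀ and k ≥ k₀, l ∈ J_k iff l ∈ J_{k₀}. -/
theorem chain_stabilises (n : ℕ) (P : Fin n → Set Rule) (ℓ : OLit → ℕ)
    (hacy : acyclicWrt (allRules P) ℓ)
    (l : OLit) (k₀ k : ℕ) (hl : ℓ l = k₀) (hk : k₀ ≤ k) :
    l ∈ chain P ℓ k ↔ l ∈ chain P ℓ k₀ := by
  induction k, hk using Nat.le_induction with
  | base => rfl
  | succ k hk ih =>
    rw [chain_step n P ℓ hacy k l (by omega)]
    exact ih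

end RuleUpdates
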